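/- Let g : (0, ∞) → [0, ∞) be defined by g(x) := |log(e^x − 1)|. Then g preserves Lebesgue measure on (0, ∞): for every Borel set A ⊆ (0, ∞), the Lebesgue measure of g^{-1}(A) equals the Lebesgue measure of A. (Each y > 0 has exactly two preimages, x₁ = log(1 + e^y) and x₂ = log(1 + e^{-y}), and the sum of the reciprocals of |g'| at these preimages equals 1: e^y/(1+e^y) + e^{-y}/(1+e^{-y}) = 1.) -/

import Mathlib

/-!
Both branches of `g⁻¹` are given by the softplus function `s(y) = log (1 + eʸ)`: one checks
`g (s y) = |y|`, and `s` is a bijection `ℝ → (0, ∞)`, so the preimage of `A ⊆ (0, ∞)` is the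
disjoint union `s(A) ∪ s(−A)`. The derivative of `s` is the sigmoid `σ(y) = (1 + e⁻ʸ)⁻¹`, and
`σ(y) + σ(−y) = 1`; by the change of variables formula the two images therefore have total
measure `∫_A (σ(y) + σ(−y)) dy = |A|`.
-/

open MeasureTheory

/-- The map `g(x) = |log(eˣ − 1)|`, conjugate of the Farey map, which preserves Lebesgue
measure on `(0, ∞)`. -/
noncomputable def logFareyMap (x : ℝ) : ℝ := |Real.log (Real.exp x - 1)|

open Set Real

lemma volume_image_eq_lintegral_abs_deriv {s : Set ℝ} {f f' : ℝ → ℝ} (hs : MeasurableSet s)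
    (hf' : ∀ x ∈ s, HasDerivWithinAt f (f' x) s x) (hf : InjOn f s) :
    volume (f '' s) = ∫⁻ x in s, ENNReal.ofReal |f' x| := by
  simpa using lintegral_image_eq_lintegral_abs_deriv_mul hs hf' hf 1

lemma aemeasurable_ofReal_abs_deriv {s : Set ℝ} {f f' : ℝ → ℝ} (hs : MeasurableSet s)
    (hf' : ∀ x ∈ s, HasDerivWithinAt f (f' x) s x) :
    AEMeasurable (fun x => ENNReal.ofReal |f' x|) (volume.restrict s) := by
  simpa only [ContinuousLinearMap.smulRight_one_eq_toSpanSingleton,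
    ContinuousLinearMap.det_toSpanSingleton] using
    aemeasurable_ofReal_abs_det_fderivWithin volume hs fun x hx => (hf' x hx).hasFDerivWithinAt

lemma volume_image_union_image_of_abs_deriv_add_abs_deriv_eq_one {s : Set ℝ}
    {f g f' g' : ℝ → ℝ} (hs : MeasurableSet s)
    (hf' : ∀ x ∈ s, HasDerivWithinAt f (f' x) s x) (hg' : ∀ x ∈ s, HasDerivWithinAt g (g' x) s x)
    (hf : InjOn f s) (hg : InjOn g s) (hfg : Disjoint (f '' s) (g '' s))
    (hsum : ∀ x ∈ s, |f' x| + |g' x| = 1) :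
    volume (f '' s ∪ g '' s) = volume s := by
  have hgs : MeasurableSet (g '' s) :=
    hs.image_of_continuousOn_injOn (fun x hx => (hg' x hx).continuousWithinAt) hg
  calc volume (f '' s ∪ g '' s)
      = (∫⁻ x in s, ENNReal.ofReal |f' x|) + ∫⁻ x in s, ENNReal.ofReal |g' x| := by
        rw [measure_union hfg hgs, volume_image_eq_lintegral_abs_deriv hs hf' hf,
          volume_image_eq_lintegral_abs_deriv hs hg' hg]
    _ = ∫⁻ x in s, (ENNReal.ofReal |f' x| + ENNReal.ofReal |g' x|) :=
        (lintegral_add_left' (aemeasurable_ofReal_abs_deriv hs hf') _).symm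
    _ = ∫⁻ _ in s, 1 := setLIntegral_congr_fun hs fun x hx => by
        rw [← ENNReal.ofReal_add (abs_nonneg _) (abs_nonneg _), hsum x hx, ENNReal.ofReal_one]
    _ = volume s := setLIntegral_one s

noncomputable def softplus (y : ℝ) : ℝ := log (1 + exp y)

lemma exp_softplus (y : ℝ) : exp (softplus y) = 1 + exp y :=
  exp_log (by positivity)

lemma softplus_pos (y : ℝ) : 0 < softplus y :=
  log_pos (by linarith [exp_pos y])

lemma strictMono_softplus : StrictMono softplus := fun _ _ h =>
  log_lt_log (by positivity) (by linarith [exp_lt_exp.2 h])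

lemma hasDerivAt_softplus (y : ℝ) : HasDerivAt softplus (sigmoid y) y := by
  refine (((hasDerivAt_exp y).const_add 1).log (by positivity)).congr_deriv ?_
  rw [sigmoid_def, exp_neg]
  field_simp
  ring

lemma softplus_log_exp_sub_one {x : ℝ} (hx : 0 < x) : softplus (log (exp x - 1)) = x := by
  rw [softplus, exp_log (sub_pos.2 (one_lt_exp_iff.2 hx)), add_sub_cancel, log_exp]

lemma logFareyMap_softplus (y : ℝ) : logFareyMap (softplus y) = |y| := by
  rw [logFareyMap, exp_softplus, add_sub_cancel_left, log_exp]

lemma preimage_logFareyMap_inter_Ioi {A : Set ℝ} (hA : A ⊆ Ioi 0) :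
    logFareyMap ⁻¹' A ∩ Ioi 0 = softplus '' A ∪ (fun y => softplus (-y)) '' A := by
  ext x
  constructor
  · rintro ⟨hxA, hx⟩
    obtain ⟨y, rfl⟩ : ∃ y, softplus y = x := ⟨_, softplus_log_exp_sub_one hx⟩
    rw [mem_preimage, logFareyMap_softplus] at hxA
    rcases le_or_gt 0 y with hy | hy
    · exact Or.inl ⟨y, by rwa [abs_of_nonneg hy] at hxA, rfl⟩
    · exact Or.inr ⟨-y, by rwa [abs_of_neg hy] at hxA, congrArg softplus (neg_neg y)⟩
  · rintro (⟨y, hy, rfl⟩ | ⟨y, hy, rfl⟩)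
    · exact ⟨by rwa [mem_preimage, logFareyMap_softplus, abs_of_pos (hA hy)], softplus_pos y⟩
    · exact ⟨by rwa [mem_preimage, logFareyMap_softplus, abs_neg, abs_of_pos (hA hy)],
        softplus_pos _⟩

lemma disjoint_image_softplus_image_softplus_neg {A : Set ℝ} (hA : A ⊆ Ioi 0) :
    Disjoint (softplus '' A) ((fun y => softplus (-y)) '' A) := by
  rw [disjoint_left]
  rintro _ ⟨y, hy, rfl⟩ ⟨z, hz, hzy⟩
  have hzy : -z = y := strictMono_softplus.injective hzy
  have hy0 : 0 < y := hA hy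
  have hz0 : 0 < z := hA hz
  linarith

/-- The map `g : (0, ∞) → [0, ∞)`, `g(x) = |log(eˣ − 1)|`, preserves
Lebesgue measure on `(0, ∞)`: for every Borel set `A ⊆ (0, ∞)`, the Lebesgue measure of
`g⁻¹(A)` (within the domain `(0, ∞)`) equals the Lebesgue measure of `A`. -/
theorem stmt_18 :
    ∀ A : Set ℝ, MeasurableSet A → A ⊆ Set.Ioi (0 : ℝ) →
      volume (logFareyMap ⁻¹' A ∩ Set.Ioi (0 : ℝ)) = volume A := by
  intro A hA hApos
  rw [preimage_logFareyMap_inter_Ioi hApos]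
  refine volume_image_union_image_of_abs_deriv_add_abs_deriv_eq_one hA
    (fun y _ => (hasDerivAt_softplus y).hasDerivWithinAt)
    (fun y _ => ((hasDerivAt_softplus (-y)).comp y (hasDerivAt_neg y)).hasDerivWithinAt)
    strictMono_softplus.injective.injOn
    (strictMono_softplus.injective.comp neg_injective).injOn
    (disjoint_image_softplus_image_softplus_neg hApos) fun y _ => ?_
  rw [abs_mul, abs_neg, abs_one, mul_one, abs_of_pos (sigmoid_pos _),
    abs_of_pos (sigmoid_pos _), sigmoid_neg]
  ring
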